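/- In the setting of the discrete momentum testing identity, assume additionally α ≠ 0 and that the scalar BDF2 updates hold: (3R^{n+1} − 4R^n + R^{n−1})/(2δt) = α R* ∫_Ω ( ρ^{n+1}⟨(u*·∇)u*, u^{n+1}⟩ + (1/2)∇·(ρ^{n+1}u*)⟨u*, u^{n+1}⟩ + ⟨(J*·∇)u*, u^{n+1}⟩ + (1/2)(∇·J*)⟨u*, u^{n+1}⟩ + ⟨∇(p^n + (4/3)ω^n − (1/3)ω^{n−1}), u^{n+1}⟩ ) dx, and (3K^{n+1} − 4K^n + K^{n−1})/(2δt) = α ∫_Ω ( −( (3/2)ρ^{n+1}|u^{n+1}|² − 2ρ^n|u^n|² + (1/2)ρ^{n−1}|u^{n−1}|² )/(2δt) + K* ⟨ ρ^{n+1}(3u^{n+1} − 4u^n + u^{n−1})/(2δt) + (1/2)((3ρ^{n+1} − 4ρ^n + ρ^{n−1})/(2δt)) u^{n+1}, u^{n+1} ⟩ ) dx. Then ∫_Ω ( (3/2)ρ^{n+1}|u^{n+1}|² − 2ρ^n|u^n|² + (1/2)ρ^{n−1}|u^{n−1}|² ) dx + (1/α)(3K^{n+1} − 4K^n + K^{n−1})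 + (1/α)(3R^{n+1} − 4R^n + R^{n−1}) = −δt ∫_Ω ν^{n+1}|D(u^{n+1})|² dx − 2δt Q* ∫_Ω φ* ⟨∇μ*, u^{n+1}⟩ dx. -/

import Mathlib

open MeasureTheory

noncomputable section

/-- Gradient of a scalar field on `ℝ^d`. -/
def grad {d : ℕ} (f : (Fin d → ℝ) → ℝ) (x : Fin d → ℝ) : Fin d → ℝ :=
  fun i => fderiv ℝ f x (Pi.single i 1)

/-- Divergence `∇·v` of a vector field on `ℝ^d`. -/
def vdiv {d : ℕ} (v : (Fin d → ℝ) → (Fin d → ℝ)) (x : Fin d → ℝ) : ℝ :=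
  ∑ i, fderiv ℝ (fun y => v y i) x (Pi.single i 1)

/-- Euclidean inner product on `ℝ^d`. -/
def dot {d : ℕ} (v w : Fin d → ℝ) : ℝ := ∑ i, v i * w i

/-- Directional derivative `((v·∇)w)(x)`: derivative of `w` at `x` in direction `v x`. -/
def dirD {d : ℕ} (v w : (Fin d → ℝ) → (Fin d → ℝ)) (x : Fin d → ℝ) : Fin d → ℝ :=
  fun i => fderiv ℝ (fun y => w y i) x (v x)

/-- Laplacian of a scalar field. -/
def lap {d : ℕ} (f : (Fin d → ℝ) → ℝ) (x : Fin d → ℝ) : ℝ := vdiv (grad f) x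

/-- Strain tensor `D(u) = ∇u + ∇uᵀ`. -/
def strain {d : ℕ} (u : (Fin d → ℝ) → (Fin d → ℝ)) (x : Fin d → ℝ) (i j : Fin d) : ℝ :=
  fderiv ℝ (fun y => u y i) x (Pi.single j 1) + fderiv ℝ (fun y => u y j) x (Pi.single i 1)

/-- Squared Frobenius norm `|D(u)|²` of the strain tensor. -/
def strainSq {d : ℕ} (u : (Fin d → ℝ) → (Fin d → ℝ)) (x : Fin d → ℝ) : ℝ :=
  ∑ i, ∑ j, (strain u x i j) ^ 2

/-- Row-wise divergence `∇·(ν D(u))`. -/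
def divStrain {d : ℕ} (ν : (Fin d → ℝ) → ℝ) (u : (Fin d → ℝ) → (Fin d → ℝ))
    (x : Fin d → ℝ) : Fin d → ℝ :=
  fun i => ∑ j, fderiv ℝ (fun y => ν y * strain u y i j) x (Pi.single j 1)

/-- Squared `L²(Ω)` norm of a scalar field. -/
def l2sq {d : ℕ} (Ω : Set (Fin d → ℝ)) (g : (Fin d → ℝ) → ℝ) : ℝ := ∫ x in Ω, (g x) ^ 2

/-- Squared `L²(Ω)` norm of a vector field. -/
def l2vsq {d : ℕ} (Ω : Set (Fin d → ℝ)) (v : (Fin d → ℝ) → (Fin d → ℝ)) : ℝ :=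
  ∫ x in Ω, dot (v x) (v x)

section helpers
variable {d : ℕ} {Kc : Set (Fin d → ℝ)}

lemma integrable_of_supp (hKc : IsCompact Kc) {h : (Fin d → ℝ) → ℝ}
    (hc : Continuous h) (h0 : ∀ x ∉ Kc, h x = 0) : Integrable h :=
  hc.integrable_of_hasCompactSupport (HasCompactSupport.intro hKc h0)

lemma fderiv_zero_outside (hKc : IsCompact Kc) {h : (Fin d → ℝ) → ℝ}
    (hs : ∀ x ∉ Kc, h x = 0) {x : Fin d → ℝ} (hx : x ∉ Kc) : fderiv ℝ h x = 0 := by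
  have hev : h =ᶠ[nhds x] (fun _ => (0 : ℝ)) :=
    Filter.eventuallyEq_of_mem (hKc.isClosed.isOpen_compl.mem_nhds hx) (fun y hy => hs y hy)
  rw [hev.fderiv_eq]
  exact fderiv_const_apply 0

lemma integral_fderiv_single_eq_zero (hKc : IsCompact Kc) {W : (Fin d → ℝ) → ℝ}
    (hW : ContDiff ℝ 1 W) (hs : ∀ x ∉ Kc, W x = 0) (v : Fin d → ℝ) :
    ∫ x, fderiv ℝ W x v = 0 := by
  have h := integral_mul_fderiv_eq_neg_fderiv_mul_of_integrable (μ := (volume : Measure (Fin d → ℝ)))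
      (f := W) (g := fun _ => (1 : ℝ)) (v := v)
      ?_ ?_ ?_ (fun x _ => hW.differentiable one_ne_zero x) (fun x _ => differentiableAt_const 1)
  · simpa using h.symm
  · exact integrable_of_supp hKc ((hW.continuous_fderiv one_ne_zero).clm_apply continuous_const |>.mul
      continuous_const) (fun x hx => by rw [fderiv_zero_outside hKc hs hx]; simp)
  · simpa using (integrable_zero _ _ (volume : Measure (Fin d → ℝ)))
  · exact integrable_of_supp hKc (hc := hW.continuous.mul continuous_const)
      (fun x hx => by rw [hs x hx]; simp)

lemma key_strain_sum (c : ℝ) (D : Fin d → Fin d → ℝ) :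
    ∑ j : Fin d, ∑ i : Fin d, (c * (D i j + D j i)) * D i j
      = (1/2) * (c * ∑ i : Fin d, ∑ j : Fin d, (D i j + D j i)^2) := by
  have h2 : ∑ i : Fin d, ∑ j : Fin d, (c * (D i j + D j i)) * D j i
      = ∑ i : Fin d, ∑ j : Fin d, (c * (D i j + D j i)) * D i j := by
    rw [Finset.sum_comm]
    exact Finset.sum_congr rfl fun i _ => Finset.sum_congr rfl fun j _ => by ring
  have h3 : c * ∑ i : Fin d, ∑ j : Fin d, (D i j + D j i)^2
      = ∑ i : Fin d, ∑ j : Fin d,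
        ((c * (D i j + D j i)) * D i j + (c * (D i j + D j i)) * D j i) := by
    rw [Finset.mul_sum]
    refine Finset.sum_congr rfl fun i _ => ?_
    rw [Finset.mul_sum]
    exact Finset.sum_congr rfl fun j _ => by ring
  rw [Finset.sum_comm, h3]
  simp only [Finset.sum_add_distrib]
  rw [h2]; ring

lemma key_strain_sum' (c : ℝ) (S D : Fin d → Fin d → ℝ) (hS : ∀ i j, S i j = D i j + D j i) :
    ∑ j : Fin d, ∑ i : Fin d, (c * S i j) * D i j
      = (1/2) * (c * ∑ i : Fin d, ∑ j : Fin d, (S i j)^2) := by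
  simp only [hS]
  exact key_strain_sum c D

end helpers

set_option maxHeartbeats 2000000 in
theorem stmt11 {d : ℕ} (hd : 1 ≤ d) (Ω : Set (Fin d → ℝ)) (hΩo : IsOpen Ω)
    (hΩb : Bornology.IsBounded Ω)
    (δt : ℝ) (hδt : 0 < δt) (Ks Rs Qs : ℝ)
    (u1 u0 um us Js : (Fin d → ℝ) → (Fin d → ℝ))
    (φs μs p0 ω0 ωm : (Fin d → ℝ) → ℝ)
    (hu1 : ContDiff ℝ (⊤ : ℕ∞) u1) (hu0 : ContDiff ℝ (⊤ : ℕ∞) u0)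
    (hum : ContDiff ℝ (⊤ : ℕ∞) um) (hus : ContDiff ℝ (⊤ : ℕ∞) us)
    (hJs : ContDiff ℝ (⊤ : ℕ∞) Js)
    (hφs : ContDiff ℝ (⊤ : ℕ∞) φs) (hμs : ContDiff ℝ (⊤ : ℕ∞) μs)
    (hp0 : ContDiff ℝ (⊤ : ℕ∞) p0) (hω0 : ContDiff ℝ (⊤ : ℕ∞) ω0)
    (hωm : ContDiff ℝ (⊤ : ℕ∞) ωm)
    (ρ1 ρ0 ρm ν1 : (Fin d → ℝ) → ℝ)
    (hρ1 : ContDiff ℝ 1 ρ1) (hρ0 : ContDiff ℝ 1 ρ0) (hρm : ContDiff ℝ 1 ρm)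
    (hν1 : ContDiff ℝ 1 ν1)
    (Kc : Set (Fin d → ℝ)) (hKc : IsCompact Kc) (hKΩ : Kc ⊆ Ω)
    (hu1supp : Function.support u1 ⊆ Kc) (hu0supp : Function.support u0 ⊆ Kc)
    (humsupp : Function.support um ⊆ Kc) (hussupp : Function.support us ⊆ Kc)
    (hJssupp : Function.support Js ⊆ Kc)
    (hφssupp : Function.support φs ⊆ Kc) (hμssupp : Function.support μs ⊆ Kc)
    (hp0supp : Function.support p0 ⊆ Kc) (hω0supp : Function.support ω0 ⊆ Kc)
    (hωmsupp : Function.support ωm ⊆ Kc)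
    (hmom : ∀ x (i : Fin d),
      Ks * (ρ1 x * ((3 * u1 x i - 4 * u0 x i + um x i) / (2 * δt)) +
          (1 / 2) * ((3 * ρ1 x - 4 * ρ0 x + ρm x) / (2 * δt)) * u1 x i) -
        divStrain ν1 u1 x i +
        Rs * grad (fun y => p0 y + (4 / 3) * ω0 y - (1 / 3) * ωm y) x i +
        Qs * φs x * grad μs x i +
        Rs * ρ1 x * dirD us us x i +
        (1 / 2) * Rs * vdiv (fun y j => ρ1 y * us y j) x * us x i +
        Rs * dirD Js us x i +
        (1 / 2) * Rs * vdiv Js x * us x i = 0)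
    (α : ℝ) (hα : α ≠ 0) (R1 R0 Rm K1 K0 Km : ℝ)
    (hR : (3 * R1 - 4 * R0 + Rm) / (2 * δt) = α * Rs * ∫ x in Ω,
      (ρ1 x * dot (dirD us us x) (u1 x) +
        (1 / 2) * vdiv (fun y j => ρ1 y * us y j) x * dot (us x) (u1 x) +
        dot (dirD Js us x) (u1 x) +
        (1 / 2) * vdiv Js x * dot (us x) (u1 x) +
        dot (grad (fun y => p0 y + (4 / 3) * ω0 y - (1 / 3) * ωm y) x) (u1 x)))
    (hK : (3 * K1 - 4 * K0 + Km) / (2 * δt) = α * ∫ x in Ω,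
      (-(((3 / 2) * ρ1 x * dot (u1 x) (u1 x) - 2 * ρ0 x * dot (u0 x) (u0 x) +
          (1 / 2) * ρm x * dot (um x) (um x)) / (2 * δt)) +
        Ks * dot (fun i => ρ1 x * ((3 * u1 x i - 4 * u0 x i + um x i) / (2 * δt)) +
          (1 / 2) * ((3 * ρ1 x - 4 * ρ0 x + ρm x) / (2 * δt)) * u1 x i) (u1 x))) :
    (∫ x in Ω, ((3 / 2) * ρ1 x * dot (u1 x) (u1 x) - 2 * ρ0 x * dot (u0 x) (u0 x) +
        (1 / 2) * ρm x * dot (um x) (um x))) +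
      (1 / α) * (3 * K1 - 4 * K0 + Km) + (1 / α) * (3 * R1 - 4 * R0 + Rm) =
      -δt * (∫ x in Ω, ν1 x * strainSq u1 x) -
        2 * δt * Qs * ∫ x in Ω, φs x * dot (grad μs x) (u1 x) := by
  have hδ2 : (2 * δt) ≠ 0 := by positivity
  -- zero outside Kc, componentwise
  have hsz : ∀ (f : (Fin d → ℝ) → ℝ), Function.support f ⊆ Kc → ∀ x, x ∉ Kc → f x = 0 :=
    fun f hf x hx => by
      by_contra h; exact hx (hf (Function.mem_support.mpr h))
  have hcompz : ∀ (v : (Fin d → ℝ) → (Fin d → ℝ)), Function.support v ⊆ Kc →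
      ∀ x, x ∉ Kc → ∀ i, v x i = 0 := by
    intro v hv x hx i
    have h0 : v x = 0 := by
      by_contra h; exact hx (hv (Function.mem_support.mpr h))
    simp [h0]
  have hu1z := hcompz u1 hu1supp
  have hu0z := hcompz u0 hu0supp
  have humz := hcompz um humsupp
  have husz := hcompz us hussupp
  have hφz := hsz φs hφssupp
  -- component smoothness
  have hu1i : ∀ i, ContDiff ℝ (⊤ : ℕ∞) (fun y => u1 y i) := fun i => contDiff_pi.mp hu1 i
  have husi : ∀ i, ContDiff ℝ (⊤ : ℕ∞) (fun y => us y i) := fun i => contDiff_pi.mp hus i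
  have hJsi : ∀ i, ContDiff ℝ (⊤ : ℕ∞) (fun y => Js y i) := fun i => contDiff_pi.mp hJs i
  have hco : (1 : WithTop ℕ∞) ≤ ((⊤ : ℕ∞) : WithTop ℕ∞) := by exact_mod_cast le_top
  have hco2 : ((⊤ : ℕ∞) : WithTop ℕ∞) + 1 ≤ ((⊤ : ℕ∞) : WithTop ℕ∞) := by
    exact_mod_cast (le_top : (⊤ : ℕ∞) + 1 ≤ ⊤)
  have hu1cd1 : ∀ i, ContDiff ℝ 1 (fun y => u1 y i) := fun i => (hu1i i).of_le hco
  have hstrainCD : ∀ i j, ContDiff ℝ (⊤ : ℕ∞) (fun y => strain u1 y i j) := by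
    intro i j
    simp only [strain]
    exact (((hu1i i).fderiv_right (m := (⊤ : ℕ∞)) hco2).clm_apply contDiff_const).add
      (((hu1i j).fderiv_right (m := (⊤ : ℕ∞)) hco2).clm_apply contDiff_const)
  have hAcd : ∀ i j, ContDiff ℝ 1 (fun y => ν1 y * strain u1 y i j) :=
    fun i j => hν1.mul ((hstrainCD i j).of_le hco)
  have hstrainz : ∀ x, x ∉ Kc → ∀ i j, strain u1 x i j = 0 := by
    intro x hx i j
    have h1 : fderiv ℝ (fun y => u1 y i) x = 0 :=
      fderiv_zero_outside hKc (fun y hy => hu1z y hy i) hx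
    have h2 : fderiv ℝ (fun y => u1 y j) x = 0 :=
      fderiv_zero_outside hKc (fun y hy => hu1z y hy j) hx
    simp [strain, h1, h2]
  -- the flux vector field W, divergence theorem
  have hWcd : ∀ j : Fin d, ContDiff ℝ 1 (fun y => ∑ i, ν1 y * strain u1 y i j * u1 y i) :=
    fun j => ContDiff.sum fun i _ => (hAcd i j).mul (hu1cd1 i)
  have hWz : ∀ j : Fin d, ∀ y, y ∉ Kc → (∑ i, ν1 y * strain u1 y i j * u1 y i) = 0 :=
    fun j y hy => Finset.sum_eq_zero fun i _ => by rw [hu1z y hy i]; ring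
  have hdiv0 : ∫ x, vdiv (fun y j => ∑ i, ν1 y * strain u1 y i j * u1 y i) x = 0 := by
    have hrfl : (fun x => vdiv (fun y j => ∑ i, ν1 y * strain u1 y i j * u1 y i) x) =
        fun x => ∑ j, fderiv ℝ (fun y => ∑ i, ν1 y * strain u1 y i j * u1 y i) x
          (Pi.single j 1) := rfl
    rw [hrfl, integral_finset_sum _ (fun j _ => integrable_of_supp hKc
      (((hWcd j).continuous_fderiv one_ne_zero).clm_apply continuous_const)
      (fun x hx => by rw [fderiv_zero_outside hKc (hWz j) hx]; simp))]
    exact Finset.sum_eq_zero fun j _ =>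
      integral_fderiv_single_eq_zero hKc (hWcd j) (hWz j) _
  have hvdivz : ∀ x, x ∉ Kc →
      vdiv (fun y j => ∑ i, ν1 y * strain u1 y i j * u1 y i) x = 0 := by
    intro x hx
    show (∑ j, fderiv ℝ (fun y => ∑ i, ν1 y * strain u1 y i j * u1 y i) x
      (Pi.single j 1)) = 0
    exact Finset.sum_eq_zero fun j _ => by
      rw [fderiv_zero_outside hKc (hWz j) hx]; simp
  -- pointwise identity: div of flux = test of divStrain + strain energy
  have hpt : ∀ x, dot (divStrain ν1 u1 x) (u1 x) + (1/2) * (ν1 x * strainSq u1 x)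
      = vdiv (fun y j => ∑ i, ν1 y * strain u1 y i j * u1 y i) x := by
    intro x
    have hd1 : ∀ i j, DifferentiableAt ℝ (fun y => ν1 y * strain u1 y i j) x :=
      fun i j => ((hAcd i j).differentiable one_ne_zero) x
    have hd2 : ∀ i, DifferentiableAt ℝ (fun y => u1 y i) x :=
      fun i => ((hu1cd1 i).differentiable one_ne_zero) x
    have step1 : ∀ j : Fin d,
        fderiv ℝ (fun y => ∑ i, ν1 y * strain u1 y i j * u1 y i) x (Pi.single j 1)
        = ∑ i, (fderiv ℝ (fun y => ν1 y * strain u1 y i j) x (Pi.single j 1) * u1 x i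
            + (ν1 x * strain u1 x i j) * fderiv ℝ (fun y => u1 y i) x (Pi.single j 1)) := by
      intro j
      rw [fderiv_fun_sum (fun i _ => ((hd1 i j).fun_mul (hd2 i)))]
      rw [ContinuousLinearMap.sum_apply]
      refine Finset.sum_congr rfl fun i _ => ?_
      rw [fderiv_fun_mul (hd1 i j) (hd2 i)]
      simp only [ContinuousLinearMap.add_apply, ContinuousLinearMap.coe_smul',
        Pi.smul_apply, smul_eq_mul]
      ring
    have hLHS : vdiv (fun y j => ∑ i, ν1 y * strain u1 y i j * u1 y i) x
        = ∑ j, ∑ i, (fderiv ℝ (fun y => ν1 y * strain u1 y i j) x (Pi.single j 1) * u1 x i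
            + (ν1 x * strain u1 x i j) * fderiv ℝ (fun y => u1 y i) x (Pi.single j 1)) := by
      show (∑ j, fderiv ℝ (fun y => ∑ i, ν1 y * strain u1 y i j * u1 y i) x
        (Pi.single j 1)) = _
      exact Finset.sum_congr rfl fun j _ => step1 j
    rw [hLHS]
    simp only [dot, divStrain, strainSq, Finset.sum_add_distrib]
    have key := key_strain_sum' (ν1 x) (strain u1 x)
      (fun i j => fderiv ℝ (fun y => u1 y i) x (Pi.single j 1)) (fun i j => rfl)
    have hswap : ∑ j, ∑ i,
        fderiv ℝ (fun y => ν1 y * strain u1 y i j) x (Pi.single j 1) * u1 x i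
        = ∑ i, (∑ j, fderiv ℝ (fun y => ν1 y * strain u1 y i j) x (Pi.single j 1)) * u1 x i := by
      rw [Finset.sum_comm]
      exact Finset.sum_congr rfl fun i _ => (Finset.sum_mul _ _ _).symm
    rw [hswap, key]
  -- pointwise momentum test identity
  have hkey : ∀ x,
      Ks * dot (fun i => ρ1 x * ((3 * u1 x i - 4 * u0 x i + um x i) / (2 * δt)) +
          (1 / 2) * ((3 * ρ1 x - 4 * ρ0 x + ρm x) / (2 * δt)) * u1 x i) (u1 x) +
        Rs * (ρ1 x * dot (dirD us us x) (u1 x) +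
          (1 / 2) * vdiv (fun y j => ρ1 y * us y j) x * dot (us x) (u1 x) +
          dot (dirD Js us x) (u1 x) +
          (1 / 2) * vdiv Js x * dot (us x) (u1 x) +
          dot (grad (fun y => p0 y + (4 / 3) * ω0 y - (1 / 3) * ωm y) x) (u1 x)) +
        Qs * (φs x * dot (grad μs x) (u1 x))
      = dot (divStrain ν1 u1 x) (u1 x) := by
    intro x
    have h2 : ∑ i, (Ks * (ρ1 x * ((3 * u1 x i - 4 * u0 x i + um x i) / (2 * δt)) +
          (1 / 2) * ((3 * ρ1 x - 4 * ρ0 x + ρm x) / (2 * δt)) * u1 x i) -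
        divStrain ν1 u1 x i +
        Rs * grad (fun y => p0 y + (4 / 3) * ω0 y - (1 / 3) * ωm y) x i +
        Qs * φs x * grad μs x i +
        Rs * ρ1 x * dirD us us x i +
        (1 / 2) * Rs * vdiv (fun y j => ρ1 y * us y j) x * us x i +
        Rs * dirD Js us x i +
        (1 / 2) * Rs * vdiv Js x * us x i) * u1 x i = 0 :=
      Finset.sum_eq_zero fun i _ => by rw [hmom x i, zero_mul]
    have h3 : Ks * dot (fun i => ρ1 x * ((3 * u1 x i - 4 * u0 x i + um x i) / (2 * δt)) +
          (1 / 2) * ((3 * ρ1 x - 4 * ρ0 x + ρm x) / (2 * δt)) * u1 x i) (u1 x) +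
        Rs * (ρ1 x * dot (dirD us us x) (u1 x) +
          (1 / 2) * vdiv (fun y j => ρ1 y * us y j) x * dot (us x) (u1 x) +
          dot (dirD Js us x) (u1 x) +
          (1 / 2) * vdiv Js x * dot (us x) (u1 x) +
          dot (grad (fun y => p0 y + (4 / 3) * ω0 y - (1 / 3) * ωm y) x) (u1 x)) +
        Qs * (φs x * dot (grad μs x) (u1 x)) - dot (divStrain ν1 u1 x) (u1 x)
        = ∑ i, (Ks * (ρ1 x * ((3 * u1 x i - 4 * u0 x i + um x i) / (2 * δt)) +
          (1 / 2) * ((3 * ρ1 x - 4 * ρ0 x + ρm x) / (2 * δt)) * u1 x i) -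
        divStrain ν1 u1 x i +
        Rs * grad (fun y => p0 y + (4 / 3) * ω0 y - (1 / 3) * ωm y) x i +
        Qs * φs x * grad μs x i +
        Rs * ρ1 x * dirD us us x i +
        (1 / 2) * Rs * vdiv (fun y j => ρ1 y * us y j) x * us x i +
        Rs * dirD Js us x i +
        (1 / 2) * Rs * vdiv Js x * us x i) * u1 x i := by
      simp only [dot, mul_add, Finset.mul_sum, ← Finset.sum_add_distrib,
        ← Finset.sum_sub_distrib]
      exact Finset.sum_congr rfl fun i _ => by ring
    linarith [h2, h3]
  -- continuity helpers
  have hcfd : ∀ (f : (Fin d → ℝ) → ℝ), ContDiff ℝ 1 f → ∀ (w : (Fin d → ℝ) → (Fin d → ℝ)),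
      Continuous w → Continuous (fun x => fderiv ℝ f x (w x)) :=
    fun f hf w hw => (hf.continuous_fderiv one_ne_zero).clm_apply hw
  have hcomp : ∀ (v : (Fin d → ℝ) → (Fin d → ℝ)), Continuous v → ∀ i,
      Continuous (fun x => v x i) := fun v hv i => (continuous_apply i).comp hv
  have hdotc : ∀ (v w : (Fin d → ℝ) → (Fin d → ℝ)), Continuous v → Continuous w →
      Continuous (fun x => dot (v x) (w x)) := by
    intro v w hv hw
    simp only [dot]
    exact continuous_finset_sum _ fun i _ => (hcomp v hv i).mul (hcomp w hw i)
  have hEc : Continuous (fun x => (3 / 2) * ρ1 x * dot (u1 x) (u1 x) -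
      2 * ρ0 x * dot (u0 x) (u0 x) + (1 / 2) * ρm x * dot (um x) (um x)) :=
    (((continuous_const.mul hρ1.continuous).mul (hdotc _ _ hu1.continuous hu1.continuous)).sub
      ((continuous_const.mul hρ0.continuous).mul (hdotc _ _ hu0.continuous hu0.continuous))).add
      ((continuous_const.mul hρm.continuous).mul (hdotc _ _ hum.continuous hum.continuous))
  -- the five integrands
  have iE : Integrable (fun x => (3 / 2) * ρ1 x * dot (u1 x) (u1 x) -
      2 * ρ0 x * dot (u0 x) (u0 x) + (1 / 2) * ρm x * dot (um x) (um x)) :=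
    integrable_of_supp hKc hEc
      (fun x hx => by simp [dot, hu1z x hx, hu0z x hx, humz x hx])
  have hMKc : Continuous (fun x =>
      dot (fun i => ρ1 x * ((3 * u1 x i - 4 * u0 x i + um x i) / (2 * δt)) +
        (1 / 2) * ((3 * ρ1 x - 4 * ρ0 x + ρm x) / (2 * δt)) * u1 x i) (u1 x)) := by
    simp only [dot]
    refine continuous_finset_sum _ fun i _ => ?_
    have ha : Continuous fun x => ρ1 x * ((3 * u1 x i - 4 * u0 x i + um x i) / (2 * δt)) :=
      hρ1.continuous.mul ((((continuous_const.mul (hcomp u1 hu1.continuous i)).sub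
        (continuous_const.mul (hcomp u0 hu0.continuous i))).add
        (hcomp um hum.continuous i)).div_const _)
    have hb : Continuous fun x => (1 / 2) * ((3 * ρ1 x - 4 * ρ0 x + ρm x) / (2 * δt)) * u1 x i :=
      (continuous_const.mul ((((continuous_const.mul hρ1.continuous).sub
        (continuous_const.mul hρ0.continuous)).add hρm.continuous).div_const _)).mul
        (hcomp u1 hu1.continuous i)
    exact (ha.add hb).mul (hcomp u1 hu1.continuous i)
  have iF : Integrable (fun x =>
      -(((3 / 2) * ρ1 x * dot (u1 x) (u1 x) - 2 * ρ0 x * dot (u0 x) (u0 x) +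
          (1 / 2) * ρm x * dot (um x) (um x)) / (2 * δt)) +
        Ks * dot (fun i => ρ1 x * ((3 * u1 x i - 4 * u0 x i + um x i) / (2 * δt)) +
          (1 / 2) * ((3 * ρ1 x - 4 * ρ0 x + ρm x) / (2 * δt)) * u1 x i) (u1 x)) :=
    integrable_of_supp hKc (((hEc.div_const _).neg).add (continuous_const.mul hMKc))
      (fun x hx => by simp [dot, hu1z x hx, hu0z x hx, humz x hx])
  have iG : Integrable (fun x =>
      ρ1 x * dot (dirD us us x) (u1 x) +
        (1 / 2) * vdiv (fun y j => ρ1 y * us y j) x * dot (us x) (u1 x) +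
        dot (dirD Js us x) (u1 x) +
        (1 / 2) * vdiv Js x * dot (us x) (u1 x) +
        dot (grad (fun y => p0 y + (4 / 3) * ω0 y - (1 / 3) * ωm y) x) (u1 x)) := by
    have c1 : Continuous (fun x => dot (dirD us us x) (u1 x)) := by
      simp only [dot, dirD]
      exact continuous_finset_sum _ fun i _ =>
        (hcfd _ ((husi i).of_le hco) us hus.continuous).mul (hcomp u1 hu1.continuous i)
    have c2 : Continuous (fun x => vdiv (fun y j => ρ1 y * us y j) x) := by
      have hr : (fun x => vdiv (fun y j => ρ1 y * us y j) x) =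
          fun x => ∑ i, fderiv ℝ (fun y => ρ1 y * us y i) x (Pi.single i 1) := rfl
      rw [hr]
      exact continuous_finset_sum _ fun i _ =>
        hcfd _ (hρ1.mul ((husi i).of_le hco)) _ continuous_const
    have c3 : Continuous (fun x => dot (us x) (u1 x)) := hdotc _ _ hus.continuous hu1.continuous
    have c4 : Continuous (fun x => dot (dirD Js us x) (u1 x)) := by
      simp only [dot, dirD]
      exact continuous_finset_sum _ fun i _ =>
        (hcfd _ ((husi i).of_le hco) Js hJs.continuous).mul (hcomp u1 hu1.continuous i)
    have c5 : Continuous (fun x => vdiv Js x) := by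
      have hr : (fun x => vdiv Js x) =
          fun x => ∑ i, fderiv ℝ (fun y => Js y i) x (Pi.single i 1) := rfl
      rw [hr]
      exact continuous_finset_sum _ fun i _ => hcfd _ ((hJsi i).of_le hco) _ continuous_const
    have c6 : Continuous (fun x =>
        dot (grad (fun y => p0 y + (4 / 3) * ω0 y - (1 / 3) * ωm y) x) (u1 x)) := by
      simp only [dot, grad]
      exact continuous_finset_sum _ fun i _ =>
        (hcfd _ (((hp0.add (contDiff_const.mul hω0)).sub (contDiff_const.mul hωm)).of_le hco)
          _ continuous_const).mul (hcomp u1 hu1.continuous i)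
    exact integrable_of_supp hKc
      (((((hρ1.continuous.mul c1).add ((continuous_const.mul c2).mul c3)).add c4).add
        ((continuous_const.mul c5).mul c3)).add c6)
      (fun x hx => by simp [dot, hu1z x hx])
  have hSqc : Continuous (fun x => strainSq u1 x) := by
    simp only [strainSq]
    exact continuous_finset_sum _ fun i _ => continuous_finset_sum _ fun j _ =>
      (hstrainCD i j).continuous.pow 2
  have iS : Integrable (fun x => ν1 x * strainSq u1 x) :=
    integrable_of_supp hKc (hν1.continuous.mul hSqc)
      (fun x hx => by simp [strainSq, hstrainz x hx])
  have iP : Integrable (fun x => φs x * dot (grad μs x) (u1 x)) :=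
    integrable_of_supp hKc
      (hφs.continuous.mul (by
        simp only [dot, grad]
        exact continuous_finset_sum _ fun i _ =>
          (hcfd _ (hμs.of_le hco) _ continuous_const).mul (hcomp u1 hu1.continuous i)))
      (fun x hx => by simp [hφz x hx])
  -- pointwise combination
  have hEE : ∀ x : Fin d → ℝ,
      2 * δt * (((3 / 2) * ρ1 x * dot (u1 x) (u1 x) - 2 * ρ0 x * dot (u0 x) (u0 x) +
        (1 / 2) * ρm x * dot (um x) (um x)) / (2 * δt)) =
      (3 / 2) * ρ1 x * dot (u1 x) (u1 x) - 2 * ρ0 x * dot (u0 x) (u0 x) +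
        (1 / 2) * ρm x * dot (um x) (um x) := fun x => by field_simp
  have hptall : ∀ x : Fin d → ℝ,
      ((3 / 2) * ρ1 x * dot (u1 x) (u1 x) - 2 * ρ0 x * dot (u0 x) (u0 x) +
        (1 / 2) * ρm x * dot (um x) (um x)) +
      (2 * δt * (-(((3 / 2) * ρ1 x * dot (u1 x) (u1 x) - 2 * ρ0 x * dot (u0 x) (u0 x) +
          (1 / 2) * ρm x * dot (um x) (um x)) / (2 * δt)) +
        Ks * dot (fun i => ρ1 x * ((3 * u1 x i - 4 * u0 x i + um x i) / (2 * δt)) +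
          (1 / 2) * ((3 * ρ1 x - 4 * ρ0 x + ρm x) / (2 * δt)) * u1 x i) (u1 x)) +
      (2 * δt * Rs * (ρ1 x * dot (dirD us us x) (u1 x) +
          (1 / 2) * vdiv (fun y j => ρ1 y * us y j) x * dot (us x) (u1 x) +
          dot (dirD Js us x) (u1 x) +
          (1 / 2) * vdiv Js x * dot (us x) (u1 x) +
          dot (grad (fun y => p0 y + (4 / 3) * ω0 y - (1 / 3) * ωm y) x) (u1 x)) +
      (δt * (ν1 x * strainSq u1 x) +
        2 * δt * Qs * (φs x * dot (grad μs x) (u1 x)))))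
      = 2 * δt * vdiv (fun y j => ∑ i, ν1 y * strain u1 y i j * u1 y i) x := fun x => by
    linear_combination (2 * δt) * (hkey x) + (2 * δt) * (hpt x) - hEE x
  -- combine the integrals
  have e1 : ∫ x in Ω, (((3 / 2) * ρ1 x * dot (u1 x) (u1 x) - 2 * ρ0 x * dot (u0 x) (u0 x) +
        (1 / 2) * ρm x * dot (um x) (um x)) +
      (2 * δt * (-(((3 / 2) * ρ1 x * dot (u1 x) (u1 x) - 2 * ρ0 x * dot (u0 x) (u0 x) +
          (1 / 2) * ρm x * dot (um x) (um x)) / (2 * δt)) +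
        Ks * dot (fun i => ρ1 x * ((3 * u1 x i - 4 * u0 x i + um x i) / (2 * δt)) +
          (1 / 2) * ((3 * ρ1 x - 4 * ρ0 x + ρm x) / (2 * δt)) * u1 x i) (u1 x)) +
      (2 * δt * Rs * (ρ1 x * dot (dirD us us x) (u1 x) +
          (1 / 2) * vdiv (fun y j => ρ1 y * us y j) x * dot (us x) (u1 x) +
          dot (dirD Js us x) (u1 x) +
          (1 / 2) * vdiv Js x * dot (us x) (u1 x) +
          dot (grad (fun y => p0 y + (4 / 3) * ω0 y - (1 / 3) * ωm y) x) (u1 x)) +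
      (δt * (ν1 x * strainSq u1 x) +
        2 * δt * Qs * (φs x * dot (grad μs x) (u1 x))))))
      = (∫ x in Ω, ((3 / 2) * ρ1 x * dot (u1 x) (u1 x) - 2 * ρ0 x * dot (u0 x) (u0 x) +
          (1 / 2) * ρm x * dot (um x) (um x))) +
        (2 * δt * (∫ x in Ω, (-(((3 / 2) * ρ1 x * dot (u1 x) (u1 x) -
            2 * ρ0 x * dot (u0 x) (u0 x) +
            (1 / 2) * ρm x * dot (um x) (um x)) / (2 * δt)) +
          Ks * dot (fun i => ρ1 x * ((3 * u1 x i - 4 * u0 x i + um x i) / (2 * δt)) +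
            (1 / 2) * ((3 * ρ1 x - 4 * ρ0 x + ρm x) / (2 * δt)) * u1 x i) (u1 x))) +
        (2 * δt * Rs * (∫ x in Ω, (ρ1 x * dot (dirD us us x) (u1 x) +
            (1 / 2) * vdiv (fun y j => ρ1 y * us y j) x * dot (us x) (u1 x) +
            dot (dirD Js us x) (u1 x) +
            (1 / 2) * vdiv Js x * dot (us x) (u1 x) +
            dot (grad (fun y => p0 y + (4 / 3) * ω0 y - (1 / 3) * ωm y) x) (u1 x))) +
        (δt * (∫ x in Ω, ν1 x * strainSq u1 x) +
          2 * δt * Qs * (∫ x in Ω, φs x * dot (grad μs x) (u1 x))))) := by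
    have j2 : Integrable (fun x => δt * (ν1 x * strainSq u1 x) +
        2 * δt * Qs * (φs x * dot (grad μs x) (u1 x))) volume :=
      (iS.const_mul δt).add (iP.const_mul (2 * δt * Qs))
    have j3 : Integrable (fun x => 2 * δt * Rs * (ρ1 x * dot (dirD us us x) (u1 x) +
          (1 / 2) * vdiv (fun y j => ρ1 y * us y j) x * dot (us x) (u1 x) +
          dot (dirD Js us x) (u1 x) +
          (1 / 2) * vdiv Js x * dot (us x) (u1 x) +
          dot (grad (fun y => p0 y + (4 / 3) * ω0 y - (1 / 3) * ωm y) x) (u1 x)) +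
        (δt * (ν1 x * strainSq u1 x) +
          2 * δt * Qs * (φs x * dot (grad μs x) (u1 x)))) volume :=
      (iG.const_mul (2 * δt * Rs)).add j2
    have j4 : Integrable (fun x =>
        2 * δt * (-(((3 / 2) * ρ1 x * dot (u1 x) (u1 x) - 2 * ρ0 x * dot (u0 x) (u0 x) +
            (1 / 2) * ρm x * dot (um x) (um x)) / (2 * δt)) +
          Ks * dot (fun i => ρ1 x * ((3 * u1 x i - 4 * u0 x i + um x i) / (2 * δt)) +
            (1 / 2) * ((3 * ρ1 x - 4 * ρ0 x + ρm x) / (2 * δt)) * u1 x i) (u1 x)) +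
        (2 * δt * Rs * (ρ1 x * dot (dirD us us x) (u1 x) +
            (1 / 2) * vdiv (fun y j => ρ1 y * us y j) x * dot (us x) (u1 x) +
            dot (dirD Js us x) (u1 x) +
            (1 / 2) * vdiv Js x * dot (us x) (u1 x) +
            dot (grad (fun y => p0 y + (4 / 3) * ω0 y - (1 / 3) * ωm y) x) (u1 x)) +
        (δt * (ν1 x * strainSq u1 x) +
          2 * δt * Qs * (φs x * dot (grad μs x) (u1 x))))) volume :=
      (iF.const_mul (2 * δt)).add j3
    rw [integral_add iE.integrableOn j4.integrableOn,
      integral_add (iF.const_mul (2 * δt)).integrableOn j3.integrableOn,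
      integral_add (iG.const_mul (2 * δt * Rs)).integrableOn j2.integrableOn,
      integral_add (iS.const_mul δt).integrableOn (iP.const_mul (2 * δt * Qs)).integrableOn,
      integral_const_mul, integral_const_mul, integral_const_mul, integral_const_mul]
  have e2 := integral_congr_ae (μ := volume.restrict Ω)
    (Filter.Eventually.of_forall hptall)
  have e3 : ∫ x in Ω, 2 * δt * vdiv (fun y j => ∑ i, ν1 y * strain u1 y i j * u1 y i) x
      = 2 * δt * ∫ x in Ω, vdiv (fun y j => ∑ i, ν1 y * strain u1 y i j * u1 y i) x :=
    integral_const_mul _ _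
  have e4 : ∫ x in Ω, vdiv (fun y j => ∑ i, ν1 y * strain u1 y i j * u1 y i) x
      = ∫ x, vdiv (fun y j => ∑ i, ν1 y * strain u1 y i j * u1 y i) x :=
    setIntegral_eq_integral_of_forall_compl_eq_zero
      (fun x hx => hvdivz x (fun hk => hx (hKΩ hk)))
  have e5 : 2 * δt * (∫ x in Ω,
      vdiv (fun y j => ∑ i, ν1 y * strain u1 y i j * u1 y i) x) = 0 := by
    rw [e4, hdiv0, mul_zero]
  have hzero : (∫ x in Ω, ((3 / 2) * ρ1 x * dot (u1 x) (u1 x) -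
        2 * ρ0 x * dot (u0 x) (u0 x) + (1 / 2) * ρm x * dot (um x) (um x))) +
      2 * δt * (∫ x in Ω, (-(((3 / 2) * ρ1 x * dot (u1 x) (u1 x) -
          2 * ρ0 x * dot (u0 x) (u0 x) +
          (1 / 2) * ρm x * dot (um x) (um x)) / (2 * δt)) +
        Ks * dot (fun i => ρ1 x * ((3 * u1 x i - 4 * u0 x i + um x i) / (2 * δt)) +
          (1 / 2) * ((3 * ρ1 x - 4 * ρ0 x + ρm x) / (2 * δt)) * u1 x i) (u1 x))) +
      2 * δt * Rs * (∫ x in Ω, (ρ1 x * dot (dirD us us x) (u1 x) +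
          (1 / 2) * vdiv (fun y j => ρ1 y * us y j) x * dot (us x) (u1 x) +
          dot (dirD Js us x) (u1 x) +
          (1 / 2) * vdiv Js x * dot (us x) (u1 x) +
          dot (grad (fun y => p0 y + (4 / 3) * ω0 y - (1 / 3) * ωm y) x) (u1 x))) +
      δt * (∫ x in Ω, ν1 x * strainSq u1 x) +
      2 * δt * Qs * (∫ x in Ω, φs x * dot (grad μs x) (u1 x)) = 0 := by
    linarith [e1, e2, e3, e5]
  -- rewrite the BDF2 scalar updates
  rw [div_eq_iff hδ2] at hK hR
  have hK2 : (1 / α) * (3 * K1 - 4 * K0 + Km) =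
      2 * δt * (∫ x in Ω, (-(((3 / 2) * ρ1 x * dot (u1 x) (u1 x) -
          2 * ρ0 x * dot (u0 x) (u0 x) +
          (1 / 2) * ρm x * dot (um x) (um x)) / (2 * δt)) +
        Ks * dot (fun i => ρ1 x * ((3 * u1 x i - 4 * u0 x i + um x i) / (2 * δt)) +
          (1 / 2) * ((3 * ρ1 x - 4 * ρ0 x + ρm x) / (2 * δt)) * u1 x i) (u1 x))) := by
    rw [hK]; rw [one_div, inv_mul_eq_iff_eq_mul₀ hα]; ring
  have hR2 : (1 / α) * (3 * R1 - 4 * R0 + Rm) =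
      2 * δt * Rs * (∫ x in Ω, (ρ1 x * dot (dirD us us x) (u1 x) +
          (1 / 2) * vdiv (fun y j => ρ1 y * us y j) x * dot (us x) (u1 x) +
          dot (dirD Js us x) (u1 x) +
          (1 / 2) * vdiv Js x * dot (us x) (u1 x) +
          dot (grad (fun y => p0 y + (4 / 3) * ω0 y - (1 / 3) * ωm y) x) (u1 x))) := by
    rw [hR]; field_simp; ring
  rw [hK2, hR2]
  linear_combination hzero

end
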